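/- For every positive integer k, ∑_{i=0}^{k-1} (1+i) ζ(2, 2+i, k-i) + 2 ∑_{i=0}^{k-1} ζ(3, 1+i, k-i) + ζ(2, k, 2) + k·ζ(2, k+1, 1) + 2ζ(3, k, 1) = ζ(2, 2, k) - 2ζ(3, 1, k) + ζ(2, k, 2) + ζ(4, k) + ζ(2, 2+k). -/

import Mathlib

/-!
The identity equates two evaluations of `ζ(2) ζ(2, k) = ∑_{n ≥ 1, m > l ≥ 1} n⁻² m⁻² l⁻ᵏ`.

Stuffle: splitting the index set according to the position of `n` relative to `m > l` gives
`2 ζ(2, 2, k) + ζ(4, k) + ζ(2, 2 + k) + ζ(2, k, 2)`.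

Shuffle: Euler's partial fraction decomposition, with `N = n + m`,
`1/(n² m²) = 2/(n N³) + 1/(n² N²) + 2/(m N³) + 1/(m² N²)`,
gives `2 ζ(3, 1, k) + ζ(2, 2, k)` from the `m`-terms, and from the `n`-terms two series over
`N > n + l` with `n` and `l` independent. Decomposing `1/(n² lᵏ)` and `1/(n lᵏ)` into partial
fractions in `n`, `l` and `n + l` (of which Euler's formula is the case `k = 2`) turns these two
series into the triple zeta values on the left-hand side.

Every series involved is dominated by `∏ᵢ (xᵢ + 1)^(-3/2)` over `ℕ³`, so all rearrangements are
justified by absolute convergence.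
-/

/-- The double zeta value `ζ(p, q) = ∑_{m > n > 0} m^{-p} n^{-q}`. -/
noncomputable def zeta2 (p q : ℕ) : ℝ :=
  ∑' (a : ℕ) (b : ℕ), 1 / (((a : ℝ) + (b : ℝ) + 2) ^ p * ((b : ℝ) + 1) ^ q)

/-- The triple zeta value `ζ(k₁, k₂, k₃) = ∑_{m₁ > m₂ > m₃ > 0} ∏ m_j^{-k_j}`. -/
noncomputable def zeta3 (k₁ k₂ k₃ : ℕ) : ℝ :=
  ∑' (a : ℕ) (b : ℕ) (c : ℕ),
    1 / (((a : ℝ) + (b : ℝ) + (c : ℝ) + 3) ^ k₁ *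
         ((b : ℝ) + (c : ℝ) + 2) ^ k₂ * ((c : ℝ) + 1) ^ k₃)

open Finset

noncomputable def zeta3Term (p q r : ℕ) (x : ℕ × ℕ × ℕ) : ℝ :=
  1 / (((x.1 : ℝ) + x.2.1 + x.2.2 + 3) ^ p * ((x.2.1 : ℝ) + x.2.2 + 2) ^ q * ((x.2.2 : ℝ) + 1) ^ r)

noncomputable def zeta2Term (p q : ℕ) (x : ℕ × ℕ) : ℝ :=
  1 / (((x.1 : ℝ) + x.2 + 2) ^ p * ((x.2 : ℝ) + 1) ^ q)

theorem zeta3_eq_tsum {p q r : ℕ} (h : Summable (zeta3Term p q r)) :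
    zeta3 p q r = ∑' x, zeta3Term p q r x := by
  rw [zeta3, h.tsum_prod]
  exact tsum_congr fun a => ((h.prod_factor a).tsum_prod).symm

theorem zeta2_eq_tsum {p q : ℕ} (h : Summable (zeta2Term p q)) :
    zeta2 p q = ∑' x, zeta2Term p q x := by
  rw [zeta2, h.tsum_prod]
  rfl

theorem one_div_le_rpow_neg_three_halves {X D : ℝ} (hX : 0 < X) (hD : 0 ≤ D)
    (h : X ^ 3 ≤ D ^ 2) : 1 / D ≤ X ^ (-(3 / 2 : ℝ)) := by
  have hX' : 0 < X ^ (3 / 2 : ℝ) := Real.rpow_pos_of_pos hX _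
  have hsq : (X ^ (3 / 2 : ℝ)) ^ 2 = X ^ 3 := by
    rw [← Real.rpow_mul_natCast hX.le]
    norm_num
  rw [Real.rpow_neg hX.le, one_div]
  exact inv_anti₀ hX' ((pow_le_pow_iff_left₀ hX'.le hD two_ne_zero).mp (hsq ▸ h))

theorem summable_succ_rpow_neg_three_halves :
    Summable fun n : ℕ => ((n : ℝ) + 1) ^ (-(3 / 2 : ℝ)) := by
  simpa using (summable_nat_add_iff 1).mpr
    (Real.summable_nat_rpow.mpr (by norm_num : -(3 / 2 : ℝ) < -1))

theorem summable_one_div_of_cube_le_sq₂ {D : ℕ × ℕ → ℝ} (hD : ∀ x, 0 < D x)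
    (h : ∀ a b : ℕ, (((a : ℝ) + 1) * ((b : ℝ) + 1)) ^ 3 ≤ D (a, b) ^ 2) :
    Summable fun x => 1 / D x := by
  have hw := summable_succ_rpow_neg_three_halves
  refine (hw.mul_of_nonneg hw (fun _ => by positivity) fun _ => by positivity).of_nonneg_of_le
    (fun x => (one_div_pos.mpr (hD x)).le) fun ⟨a, b⟩ => ?_
  rw [← Real.mul_rpow (by positivity) (by positivity)]
  exact one_div_le_rpow_neg_three_halves (by positivity) (hD _).le (h a b)

theorem summable_one_div_of_cube_le_sq₃ {D : ℕ × ℕ × ℕ → ℝ} (hD : ∀ x, 0 < D x)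
    (h : ∀ a b c : ℕ, (((a : ℝ) + 1) * (((b : ℝ) + 1) * ((c : ℝ) + 1))) ^ 3 ≤ D (a, b, c) ^ 2) :
    Summable fun x => 1 / D x := by
  have hw := summable_succ_rpow_neg_three_halves
  have hw₂ := hw.mul_of_nonneg hw (fun _ => by positivity) fun _ => by positivity
  refine (hw.mul_of_nonneg hw₂ (fun _ => by positivity) fun _ => by positivity).of_nonneg_of_le
    (fun x => (one_div_pos.mpr (hD x)).le) fun ⟨a, b, c⟩ => ?_
  rw [← Real.mul_rpow (by positivity) (by positivity),
    ← Real.mul_rpow (by positivity) (by positivity)]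
  exact one_div_le_rpow_neg_three_halves (by positivity) (hD _).le (h a b c)

theorem summable_zeta2Term_two_one : Summable (zeta2Term 2 1) := by
  refine summable_one_div_of_cube_le_sq₂ (fun _ => by positivity) fun a b => ?_
  have ha : (0 : ℝ) ≤ a := a.cast_nonneg
  have hb : (0 : ℝ) ≤ b := b.cast_nonneg
  calc (((a : ℝ) + 1) * ((b : ℝ) + 1)) ^ 3
        = ((a : ℝ) + 1) ^ 3 * ((b : ℝ) + 1) * ((b : ℝ) + 1) ^ 2 := by ring
    _ ≤ ((a : ℝ) + b + 2) ^ 3 * ((a : ℝ) + b + 2) * ((b : ℝ) + 1) ^ 2 := by gcongr <;> linarith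
    _ = (((a : ℝ) + b + 2) ^ 2 * ((b : ℝ) + 1) ^ 1) ^ 2 := by ring

theorem summable_zeta3Term_two_one_two : Summable (zeta3Term 2 1 2) := by
  refine summable_one_div_of_cube_le_sq₃ (fun _ => by positivity) fun a b c => ?_
  have ha : (0 : ℝ) ≤ a := a.cast_nonneg
  have hb : (0 : ℝ) ≤ b := b.cast_nonneg
  have hc : (1 : ℝ) ≤ c + 1 := by simp
  calc (((a : ℝ) + 1) * (((b : ℝ) + 1) * ((c : ℝ) + 1))) ^ 3
        = ((a : ℝ) + 1) ^ 3 * ((b : ℝ) + 1) ^ 2 * ((b : ℝ) + 1) * ((c : ℝ) + 1) ^ 3 := by ring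
    _ ≤ ((a : ℝ) + b + c + 3) ^ 3 * ((b : ℝ) + c + 2) ^ 2 * ((a : ℝ) + b + c + 3) *
          ((c : ℝ) + 1) ^ 4 := by gcongr <;> linarith
    _ = (((a : ℝ) + b + c + 3) ^ 2 * ((b : ℝ) + c + 2) ^ 1 * ((c : ℝ) + 1) ^ 2) ^ 2 := by ring

theorem zeta2Term_le_zeta2Term_two_one {p q : ℕ} (hp : 2 ≤ p) (hq : 1 ≤ q) (x : ℕ × ℕ) :
    zeta2Term p q x ≤ zeta2Term 2 1 x := by
  have ha : (0 : ℝ) ≤ x.1 := x.1.cast_nonneg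
  have hb : (0 : ℝ) ≤ x.2 := x.2.cast_nonneg
  refine one_div_le_one_div_of_le (by positivity) ?_
  gcongr <;> linarith

-- Every extra power of `N ≥ m ≥ l` in the denominator is at least `l`.
theorem zeta3Term_le_zeta3Term_two_one_two {p q r : ℕ} (hp : 2 ≤ p) (hq : 1 ≤ q) (hr : 1 ≤ r)
    (hw : 5 ≤ p + q + r) (x : ℕ × ℕ × ℕ) : zeta3Term p q r x ≤ zeta3Term 2 1 2 x := by
  obtain ⟨p, rfl⟩ := Nat.exists_eq_add_of_le hp
  obtain ⟨q, rfl⟩ := Nat.exists_eq_add_of_le hq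
  obtain ⟨r, rfl⟩ := Nat.exists_eq_add_of_le hr
  obtain ⟨a, b, c⟩ := x
  have ha : (0 : ℝ) ≤ a := a.cast_nonneg
  have hb : (0 : ℝ) ≤ b := b.cast_nonneg
  have hl : (1 : ℝ) ≤ c + 1 := by simp
  set N : ℝ := a + b + c + 3
  set m : ℝ := b + c + 2
  set l : ℝ := c + 1
  refine one_div_le_one_div_of_le (by positivity) ?_
  calc N ^ 2 * m ^ 1 * l ^ 2 = N ^ 2 * m * l * l ^ 1 := by ring
    _ ≤ N ^ 2 * m * l * l ^ (p + q + r) := by gcongr; omega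
    _ = N ^ 2 * m * l * (l ^ p * l ^ q * l ^ r) := by ring
    _ ≤ N ^ 2 * m * l * (N ^ p * m ^ q * l ^ r) := by gcongr <;> linarith
    _ = N ^ (2 + p) * m ^ (1 + q) * l ^ (1 + r) := by ring

theorem hasSum_zeta3Term {p q r : ℕ} (hp : 2 ≤ p) (hq : 1 ≤ q) (hr : 1 ≤ r)
    (hw : 5 ≤ p + q + r) : HasSum (zeta3Term p q r) (zeta3 p q r) := by
  have h := summable_zeta3Term_two_one_two.of_nonneg_of_le
    (fun x => by unfold zeta3Term; positivity) (zeta3Term_le_zeta3Term_two_one_two hp hq hr hw)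
  rw [zeta3_eq_tsum h]
  exact h.hasSum

theorem hasSum_zeta2Term {p q : ℕ} (hp : 2 ≤ p) (hq : 1 ≤ q) :
    HasSum (zeta2Term p q) (zeta2 p q) := by
  have h := summable_zeta2Term_two_one.of_nonneg_of_le
    (fun x => by unfold zeta2Term; positivity) (zeta2Term_le_zeta2Term_two_one hp hq)
  rw [zeta2_eq_tsum h]
  exact h.hasSum

theorem one_div_mul_pow_eq {s r : ℝ} (hs : 0 < s) (hr : 0 < r) (k : ℕ) :
    1 / (s * r ^ k) =
      ∑ i ∈ range k, 1 / ((s + r) ^ (1 + i) * r ^ (k - i)) + 1 / (s * (s + r) ^ k) := by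
  induction k with
  | zero => simp
  | succ k ih =>
    have hm : 0 < s + r := by linarith
    have hshift : ∀ i ∈ range k,
        1 / ((s + r) ^ (1 + i) * r ^ (k + 1 - i)) = 1 / ((s + r) ^ (1 + i) * r ^ (k - i)) / r := by
      intro i hi
      rw [Nat.sub_add_comm (mem_range.mp hi).le, pow_succ, div_div, mul_assoc]
    rw [sum_range_succ, sum_congr rfl hshift, ← sum_div, Nat.add_sub_cancel_left,
      eq_sub_of_add_eq ih.symm]
    field_simp
    ring

theorem one_div_sq_mul_pow_eq {s r : ℝ} (hs : 0 < s) (hr : 0 < r) (k : ℕ) :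
    1 / (s ^ 2 * r ^ k) =
      ∑ i ∈ range k, (1 + i : ℝ) / ((s + r) ^ (2 + i) * r ^ (k - i)) +
        k / (s * (s + r) ^ (k + 1)) + 1 / (s ^ 2 * (s + r) ^ k) := by
  induction k with
  | zero => simp
  | succ k ih =>
    have hm : 0 < s + r := by linarith
    have hshift : ∀ i ∈ range k, (1 + i : ℝ) / ((s + r) ^ (2 + i) * r ^ (k + 1 - i)) =
        (1 + i : ℝ) / ((s + r) ^ (2 + i) * r ^ (k - i)) / r := by
      intro i hi
      rw [Nat.sub_add_comm (mem_range.mp hi).le, pow_succ, div_div, mul_assoc]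
    rw [sum_range_succ, sum_congr rfl hshift, ← sum_div, Nat.add_sub_cancel_left,
      eq_sub_of_add_eq (eq_sub_of_add_eq ih.symm)]
    push_cast
    field_simp
    ring

-- With `N = a + b + c + 3`, `n = b + 1`, `l = c + 1`: the summand of `∑_{N > n + l} N⁻ᵖ n⁻ᵠ l⁻ʳ`.
noncomputable def mixedTerm (p q r : ℕ) (x : ℕ × ℕ × ℕ) : ℝ :=
  1 / (((x.1 : ℝ) + x.2.1 + x.2.2 + 3) ^ p * ((x.2.1 : ℝ) + 1) ^ q * ((x.2.2 : ℝ) + 1) ^ r)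

-- With `n = a + 1`, `m = b + c + 2`, `l = c + 1`: the summand of `ζ(2) ζ(2, k)`.
noncomputable def productTerm (k : ℕ) (x : ℕ × ℕ × ℕ) : ℝ :=
  1 / (((x.1 : ℝ) + 1) ^ 2 * ((x.2.1 : ℝ) + x.2.2 + 2) ^ 2 * ((x.2.2 : ℝ) + 1) ^ k)

def swapFirst : ℕ × ℕ × ℕ ≃ ℕ × ℕ × ℕ where
  toFun x := (x.2.1, x.1, x.2.2)
  invFun x := (x.2.1, x.1, x.2.2)

def swapLast : ℕ × ℕ × ℕ ≃ ℕ × ℕ × ℕ where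
  toFun x := (x.1, x.2.2, x.2.1)
  invFun x := (x.1, x.2.2, x.2.1)

theorem mixedTerm_two_two_eq (k : ℕ) (x : ℕ × ℕ × ℕ) :
    mixedTerm 2 2 k x = ∑ i ∈ range k, (1 + i : ℝ) * zeta3Term 2 (2 + i) (k - i) x +
      k * zeta3Term 2 (k + 1) 1 (swapLast x) + zeta3Term 2 k 2 (swapLast x) := by
  obtain ⟨a, b, c⟩ := x
  have hn : (0 : ℝ) < b + 1 := by positivity
  have hl : (0 : ℝ) < c + 1 := by positivity
  have hN : (a : ℝ) + c + b + 3 = a + b + c + 3 := by ring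
  have hm : (c : ℝ) + b + 2 = (b + 1) + (c + 1) := by ring
  have hm' : (b : ℝ) + c + 2 = (b + 1) + (c + 1) := by ring
  simp only [mixedTerm, zeta3Term, swapLast, Equiv.coe_fn_mk, hN, hm, hm']
  generalize (a : ℝ) + b + c + 3 = N
  generalize (b : ℝ) + 1 = n at hn ⊢
  generalize (c : ℝ) + 1 = l at hl ⊢
  rw [mul_assoc, ← one_div_mul_one_div, one_div_sq_mul_pow_eq hn hl, mul_add, mul_add, mul_sum]
  generalize n + l = m
  congr 1
  congr 1
  · exact sum_congr rfl fun i _ => by ring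
  · ring
  · ring

theorem mixedTerm_three_one_eq (k : ℕ) (x : ℕ × ℕ × ℕ) :
    mixedTerm 3 1 k x =
      ∑ i ∈ range k, zeta3Term 3 (1 + i) (k - i) x + zeta3Term 3 k 1 (swapLast x) := by
  obtain ⟨a, b, c⟩ := x
  have hn : (0 : ℝ) < b + 1 := by positivity
  have hl : (0 : ℝ) < c + 1 := by positivity
  have hN : (a : ℝ) + c + b + 3 = a + b + c + 3 := by ring
  have hm : (c : ℝ) + b + 2 = (b + 1) + (c + 1) := by ring
  have hm' : (b : ℝ) + c + 2 = (b + 1) + (c + 1) := by ring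
  simp only [mixedTerm, zeta3Term, swapLast, Equiv.coe_fn_mk, hN, hm, hm']
  generalize (a : ℝ) + b + c + 3 = N
  generalize (b : ℝ) + 1 = n at hn ⊢
  generalize (c : ℝ) + 1 = l at hl ⊢
  rw [mul_assoc, ← one_div_mul_one_div, pow_one, one_div_mul_pow_eq hn hl, mul_add, mul_sum]
  generalize n + l = m
  congr 1
  · exact sum_congr rfl fun i _ => by ring
  · ring

theorem productTerm_eq_shuffle (k : ℕ) (x : ℕ × ℕ × ℕ) :
    productTerm k x = 2 * mixedTerm 3 1 k (swapFirst x) + mixedTerm 2 2 k (swapFirst x) +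
      2 * zeta3Term 3 1 k x + zeta3Term 2 2 k x := by
  obtain ⟨a, b, c⟩ := x
  have hn : (0 : ℝ) < a + 1 := by positivity
  have hm : (0 : ℝ) < b + c + 2 := by positivity
  have hN : (b : ℝ) + a + c + 3 = (a + 1) + (b + c + 2) := by ring
  have hN' : (a : ℝ) + b + c + 3 = (a + 1) + (b + c + 2) := by ring
  have euler := one_div_sq_mul_pow_eq hn hm 2
  norm_num [sum_range_succ] at euler
  simp only [productTerm, mixedTerm, zeta3Term, swapFirst, Equiv.coe_fn_mk, hN, hN']
  generalize (a : ℝ) + 1 = n at euler ⊢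
  generalize (b : ℝ) + c + 2 = m at euler ⊢
  generalize (c : ℝ) + 1 = l
  generalize n + m = N at euler ⊢
  linear_combination (1 / l ^ k) * euler

theorem hasSum_mixedTerm_two_two {k : ℕ} (hk : 1 ≤ k) :
    HasSum (mixedTerm 2 2 k) (∑ i ∈ range k, (1 + i : ℝ) * zeta3 2 (2 + i) (k - i) +
      k * zeta3 2 (k + 1) 1 + zeta3 2 k 2) := by
  have hsum := hasSum_sum (s := range k) fun i hi =>
    (hasSum_zeta3Term (p := 2) (q := 2 + i) (r := k - i) le_rfl (by omega)
      (by have := mem_range.mp hi; omega) (by omega)).mul_left (1 + i : ℝ)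
  have hlast₁ := swapLast.hasSum_iff.mpr
    (hasSum_zeta3Term (p := 2) (q := k + 1) (r := 1) le_rfl (by omega) le_rfl (by omega))
  have hlast₂ := swapLast.hasSum_iff.mpr
    (hasSum_zeta3Term (p := 2) (q := k) (r := 2) le_rfl hk (by omega) (by omega))
  exact ((hsum.add (hlast₁.mul_left (k : ℝ))).add hlast₂).congr_fun (mixedTerm_two_two_eq k)

theorem hasSum_mixedTerm_three_one {k : ℕ} (hk : 1 ≤ k) :
    HasSum (mixedTerm 3 1 k) (∑ i ∈ range k, zeta3 3 (1 + i) (k - i) + zeta3 3 k 1) := by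
  have hsum := hasSum_sum (s := range k) fun i hi =>
    hasSum_zeta3Term (p := 3) (q := 1 + i) (r := k - i) (by omega) (by omega)
      (by have := mem_range.mp hi; omega) (by omega)
  have hlast := swapLast.hasSum_iff.mpr
    (hasSum_zeta3Term (p := 3) (q := k) (r := 1) (by omega) hk le_rfl (by omega))
  exact (hsum.add hlast).congr_fun (mixedTerm_three_one_eq k)

theorem hasSum_productTerm_shuffle {k : ℕ} (hk : 1 ≤ k) :
    HasSum (productTerm k)
      (2 * (∑ i ∈ range k, zeta3 3 (1 + i) (k - i) + zeta3 3 k 1) +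
        (∑ i ∈ range k, (1 + i : ℝ) * zeta3 2 (2 + i) (k - i) + k * zeta3 2 (k + 1) 1 +
          zeta3 2 k 2) + 2 * zeta3 3 1 k + zeta3 2 2 k) := by
  have h₃₁ := swapFirst.hasSum_iff.mpr (hasSum_mixedTerm_three_one hk)
  have h₂₂ := swapFirst.hasSum_iff.mpr (hasSum_mixedTerm_two_two hk)
  have hζ₃₁ := hasSum_zeta3Term (p := 3) (q := 1) (r := k) (by omega) le_rfl hk (by omega)
  have hζ₂₂ := hasSum_zeta3Term (p := 2) (q := 2) (r := k) le_rfl (by omega) hk (by omega)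
  exact ((((h₃₁.mul_left 2).add h₂₂).add (hζ₃₁.mul_left 2)).add hζ₂₂).congr_fun
    (productTerm_eq_shuffle k)

-- The five regions `n > m`, `n = m`, `m > n > l`, `n = l`, `n < l` of the index set of
-- `productTerm`, each parametrised as the index set of the corresponding zeta value.
def stuffleIndex :
    (ℕ × ℕ × ℕ) ⊕ (ℕ × ℕ) ⊕ (ℕ × ℕ × ℕ) ⊕ (ℕ × ℕ) ⊕ (ℕ × ℕ × ℕ) → ℕ × ℕ × ℕ
  | .inl (d, b, c) => (b + c + d + 2, b, c)
  | .inr (.inl (b, c)) => (b + c + 1, b, c)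
  | .inr (.inr (.inl (d, e, c))) => (c + e + 1, d + e + 1, c)
  | .inr (.inr (.inr (.inl (b, c)))) => (c, b, c)
  | .inr (.inr (.inr (.inr (p, q, r)))) => (r, p, q + r + 1)

theorem stuffleIndex_bijective : Function.Bijective stuffleIndex := by
  constructor
  · rintro (⟨_, _, _⟩ | ⟨_, _⟩ | ⟨_, _, _⟩ | ⟨_, _⟩ | ⟨_, _, _⟩)
      (⟨_, _, _⟩ | ⟨_, _⟩ | ⟨_, _, _⟩ | ⟨_, _⟩ | ⟨_, _, _⟩) h <;>
    simp only [stuffleIndex, Prod.mk.injEq, Sum.inl.injEq, Sum.inr.injEq, reduceCtorEq] at h ⊢ <;>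
    omega
  · rintro ⟨a, b, c⟩
    obtain h | h | h | h | h :
        b + c + 2 ≤ a ∨ a = b + c + 1 ∨ (c < a ∧ a ≤ b + c) ∨ a = c ∨ a < c := by omega
    exacts [⟨.inl (a - (b + c + 2), b, c), by grind [stuffleIndex]⟩,
      ⟨.inr (.inl (b, c)), by grind [stuffleIndex]⟩,
      ⟨.inr (.inr (.inl (b + c - a, a - c - 1, c))), by grind [stuffleIndex]⟩,
      ⟨.inr (.inr (.inr (.inl (b, c)))), by grind [stuffleIndex]⟩,
      ⟨.inr (.inr (.inr (.inr (b, c - a - 1, a)))), by grind [stuffleIndex]⟩]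

theorem productTerm_comp_stuffleIndex (k : ℕ) :
    productTerm k ∘ stuffleIndex =
      Sum.elim (zeta3Term 2 2 k) (Sum.elim (zeta2Term 4 k) (Sum.elim (zeta3Term 2 2 k)
        (Sum.elim (zeta2Term 2 (2 + k)) (zeta3Term 2 k 2)))) := by
  funext s
  rcases s with ⟨_, _, _⟩ | ⟨_, _⟩ | ⟨_, _, _⟩ | ⟨_, _⟩ | ⟨_, _, _⟩ <;>
  simp only [Function.comp_apply, stuffleIndex, productTerm, zeta3Term, zeta2Term, Sum.elim_inl,
    Sum.elim_inr] <;>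
  push_cast <;>
  ring

theorem hasSum_productTerm_stuffle {k : ℕ} (hk : 1 ≤ k) :
    HasSum (productTerm k)
      (zeta3 2 2 k + (zeta2 4 k + (zeta3 2 2 k + (zeta2 2 (2 + k) + zeta3 2 k 2)))) := by
  rw [← (Equiv.ofBijective _ stuffleIndex_bijective).hasSum_iff, Equiv.ofBijective,
    Equiv.coe_fn_mk, productTerm_comp_stuffleIndex]
  have h₂₂ := hasSum_zeta3Term (p := 2) (q := 2) (r := k) le_rfl (by omega) hk (by omega)
  refine .sum h₂₂ (.sum ?_ (.sum h₂₂ (.sum ?_ ?_)))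
  exacts [hasSum_zeta2Term (by omega) hk, hasSum_zeta2Term le_rfl (by omega),
    hasSum_zeta3Term le_rfl hk (by omega) (by omega)]

theorem double_shuffle_relation_family (k : ℕ) (hk : 1 ≤ k) :
    (∑ i ∈ Finset.range k, (1 + (i : ℝ)) * zeta3 2 (2 + i) (k - i)) +
      2 * (∑ i ∈ Finset.range k, zeta3 3 (1 + i) (k - i)) +
      zeta3 2 k 2 + (k : ℝ) * zeta3 2 (k + 1) 1 + 2 * zeta3 3 k 1 =
    zeta3 2 2 k - 2 * zeta3 3 1 k + zeta3 2 k 2 + zeta2 4 k + zeta2 2 (2 + k) := by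
  have h := (hasSum_productTerm_shuffle hk).unique (hasSum_productTerm_stuffle hk)
  linear_combination h
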